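/- arXiv:1902.07640 — 3 statements merged into one kernel-verified Lean document; each statement's English description precedes it below -/
import Mathlib

section
/- With D as above (D f = i T₁ ∂₊f + i T₂ ∂₋f − T₁T₂ ∂₊∂₋f, where T₁² = T₂² = 0), for any M×M matrix B of smooth functions one has det((1+D)B) = (1+D)(det B), where (1+D)B is applied entrywise. -/
open Matrix

/-- `det((1+D)B) = (1+D)(det B)` for `D f = i T₁ ∂₊f + i T₂ ∂₋f − T₁T₂ ∂₊∂₋f`
applied entrywise to an `M × M` matrix `B` over a commutative algebra of
"smooth functions" with commuting derivations `∂₊, ∂₋`. -/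
theorem stmt8 {A : Type*} [CommRing A] [Algebra ℂ A]
    (dp dm : Derivation ℂ A A)
    (hcomm : ∀ f : A, dp (dm f) = dm (dp f))
    (T₁ T₂ : A) (hT₁ : T₁ ^ 2 = 0) (hT₂ : T₂ ^ 2 = 0)
    (hT₁p : dp T₁ = 0) (hT₁m : dm T₁ = 0) (hT₂p : dp T₂ = 0) (hT₂m : dm T₂ = 0)
    (D : A → A)
    (hD : ∀ f : A, D f = Complex.I • (T₁ * dp f) + Complex.I • (T₂ * dm f)
        - T₁ * T₂ * dp (dm f))
    (M : ℕ) (B : Matrix (Fin M) (Fin M) A) :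
    (Matrix.of fun i j => B i j + D (B i j)).det = B.det + D B.det := by
  have hI : (algebraMap ℂ A Complex.I) * (algebraMap ℂ A Complex.I) = -1 := by
    rw [← _root_.map_mul, Complex.I_mul_I, _root_.map_neg, _root_.map_one]
  have hs : ∀ x : A, Complex.I • x = algebraMap ℂ A Complex.I * x :=
    fun x => Algebra.smul_def _ _
  have hmul : ∀ f g : A, (f + D f) * (g + D g) = f * g + D (f * g) := by
    intro f g
    simp only [hD, hs, Derivation.leibniz, _root_.map_add, smul_eq_mul]
    set i := algebraMap ℂ A Complex.I
    linear_combination (T₁*T₂*(dp f * dm g + dm f * dp g)) * hI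
      + (i*i*dp f*dp g - i*T₂*(dp f * dp (dm g) + dp (dm f) * dp g)
          + T₂^2 * dp (dm f) * dp (dm g)) * hT₁
      + (i*i*dm f*dm g - i*T₁*(dm f * dp (dm g) + dp (dm f) * dm g)) * hT₂
  have hone : (1 : A) + D 1 = 1 := by
    simp [hD]
  have hzero : (0 : A) + D 0 = 0 := by
    simp [hD]
  have hadd : ∀ f g : A, (f + g) + D (f + g) = (f + D f) + (g + D g) := by
    intro f g
    simp only [hD]
    ring_nf
    simp only [_root_.map_add, hs]
    ring
  let φ : A →+* A :=
    { toFun := fun f => f + D f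
      map_one' := hone
      map_mul' := fun f g => (hmul f g).symm
      map_zero' := hzero
      map_add' := hadd }
  have h1 : (Matrix.of fun i j => B i j + D (B i j)) = B.map φ := rfl
  have h2 : (B.map φ).det = φ B.det := (RingHom.map_det φ B).symm
  rw [h1, h2]
  rfl
end

section
/- If f, g : ℂ → ℝ satisfy f(x₊) + g(x₋) = 4|x|²γ²/(1+|x|²)² for all x ∈ ℂ (with x₊ = x, x₋ = conj(x), |x|² = x₊x₋) and some real constant γ, then γ = 0. -/
/-- If `f` depends only on the holomorphic coordinate `x₊` and `g` only on the
antiholomorphic coordinate `x₋` (treated as independent variables), and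
`f(x₊) + g(x₋) = 4 x₊x₋ γ² / (1 + x₊x₋)²`, then `γ = 0`. -/
theorem stmt11 (f g : ℂ → ℂ) (γ : ℝ)
    (h : ∀ z w : ℂ, 1 + z * w ≠ 0 →
      f z + g w = 4 * (z * w) * (γ : ℂ) ^ 2 / (1 + z * w) ^ 2) :
    γ = 0 := by
  have h00 := h 0 0 (by norm_num)
  have h01 := h 0 1 (by norm_num)
  have h10 := h 1 0 (by norm_num)
  have h11 := h 1 1 (by norm_num)
  have hγ : (γ : ℂ) ^ 2 = 0 := by
    have : f 1 + g 1 = (γ : ℂ) ^ 2 := by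
      rw [h11]; ring
    linear_combination h10 + h01 - h00 - this
  have : (γ : ℂ) = 0 := by
    exact pow_eq_zero_iff (two_ne_zero) |>.mp hγ
  exact_mod_cast this
end

section
/- Let β(x) be a real polynomial and set β₂₂(x) = x·β(x) with β₁₁ = β. If β₁₁ and β₂₂ satisfy the curvature constraint equation (1+x²)²[4(x²−1)((β₁₁')²+(β₂₂')²) + (1+x²)²((β₁₁'')²+(β₂₂'')²)] − 8x(1+x²)(x²−2)(β₁₁β₁₁'+β₂₂β₂₂') + 4x²(1+x²)²(β₁₁β₁₁''+β₂₂β₂₂'') + 4(1−4x²+x⁴)(β₁₁²+β₂₂²) − 4x(1+x²)³(β₁₁'β₁₁''+β₂₂'β₂₂'') = 0 for all x ∈ ℝ, then this equation is equivalent to (1+x²)⁵ (β₁₁''(x))² = 0, hence β₁₁ is affine: β₁₁(x) = a₀ + d₂x. -/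
/-!
Since `β₂₂ = x β₁₁`, the derivatives of `β₂₂` are `β₁₁ + x β₁₁'` and `2 β₁₁' + x β₁₁''`. Substituting
these into the constraint, every term not involving `β₁₁''` cancels and what remains is
`(1+x²)⁵ (β₁₁'')²`. As `1 + x² > 0`, the constraint therefore says `β₁₁'' ≡ 0`, i.e. `β₁₁` is affine.
-/

/-- The left-hand side of the curvature constraint, evaluated at the point `x` on the values
`p, q` of `β₁₁, β₂₂` and their first and second derivatives `p', q'` and `p'', q''`. -/
def curvatureConstraint {R : Type*} [CommRing R] (x p q p' q' p'' q'' : R) : R :=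
  (1 + x ^ 2) ^ 2 * (4 * (x ^ 2 - 1) * (p' ^ 2 + q' ^ 2) + (1 + x ^ 2) ^ 2 * (p'' ^ 2 + q'' ^ 2))
    - 8 * x * (1 + x ^ 2) * (x ^ 2 - 2) * (p * p' + q * q')
    + 4 * x ^ 2 * (1 + x ^ 2) ^ 2 * (p * p'' + q * q'')
    + 4 * (1 - 4 * x ^ 2 + x ^ 4) * (p ^ 2 + q ^ 2)
    - 4 * x * (1 + x ^ 2) ^ 3 * (p' * p'' + q' * q'')

theorem curvatureConstraint_id_mul {R : Type*} [CommRing R] (x p p' p'' : R) :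
    curvatureConstraint x p (x * p) p' (p + x * p') p'' (2 * p' + x * p'')
      = (1 + x ^ 2) ^ 5 * p'' ^ 2 := by
  unfold curvatureConstraint
  ring

section Deriv

variable {𝕜 : Type*} [NontriviallyNormedField 𝕜] {f : 𝕜 → 𝕜} {x : 𝕜}

theorem deriv_id_mul (hf : DifferentiableAt 𝕜 f x) :
    deriv (fun y => y * f y) x = f x + x * deriv f x := by
  rw [deriv_fun_mul differentiableAt_fun_id hf, deriv_id'']
  ring

theorem deriv_deriv_id_mul (hf : Differentiable 𝕜 f) (hf' : DifferentiableAt 𝕜 (deriv f) x) :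
    deriv (deriv fun y => y * f y) x = 2 * deriv f x + x * deriv (deriv f) x := by
  have h : deriv (fun y => y * f y) = fun y => f y + y * deriv f y :=
    funext fun y => deriv_id_mul (hf y)
  rw [h, deriv_fun_add (hf x) (differentiableAt_fun_id.fun_mul hf'), deriv_id_mul hf']
  ring

end Deriv

theorem deriv_deriv_eq_zero_iff_affine {𝕜 : Type*} [RCLike 𝕜] {f : 𝕜 → 𝕜}
    (hf : Differentiable 𝕜 f) (hf' : Differentiable 𝕜 (deriv f)) :
    (∀ x, deriv (deriv f) x = 0) ↔ ∃ a b : 𝕜, ∀ x, f x = a + b * x := by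
  constructor
  · intro h
    set b := deriv f 0
    have hg : Differentiable 𝕜 fun y => f y - b * y := hf.sub (differentiable_fun_id.const_mul b)
    have hg' : ∀ y, deriv (fun y => f y - b * y) y = 0 := fun y => by
      rw [deriv_fun_sub (hf y) (differentiableAt_fun_id.const_mul b), deriv_const_mul_id,
        is_const_of_deriv_eq_zero hf' h y 0, sub_self]
    refine ⟨f 0, b, fun x => ?_⟩
    linear_combination is_const_of_deriv_eq_zero hg hg' x 0
  · rintro ⟨a, b, hab⟩ x
    obtain rfl : f = fun y => a + b * y := funext hab
    simp

/-- With `β₂₂(x) = x β₁₁(x)`, the curvature constraint equation reduces to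
`(1+x²)⁵ (β₁₁'')² = 0`, so it holds for all `x` iff `β₁₁` is affine. -/
theorem stmt13 (β : ℝ → ℝ) (hβ : ContDiff ℝ 2 β) :
    (∀ x : ℝ,
        (1 + x ^ 2) ^ 2 *
            (4 * (x ^ 2 - 1) *
                ((deriv β x) ^ 2 + (deriv (fun y => y * β y) x) ^ 2)
              + (1 + x ^ 2) ^ 2 *
                ((deriv (deriv β) x) ^ 2
                  + (deriv (deriv (fun y => y * β y)) x) ^ 2))
          - 8 * x * (1 + x ^ 2) * (x ^ 2 - 2) *
              (β x * deriv β x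
                + (x * β x) * deriv (fun y => y * β y) x)
          + 4 * x ^ 2 * (1 + x ^ 2) ^ 2 *
              (β x * deriv (deriv β) x
                + (x * β x) * deriv (deriv (fun y => y * β y)) x)
          + 4 * (1 - 4 * x ^ 2 + x ^ 4) * ((β x) ^ 2 + (x * β x) ^ 2)
          - 4 * x * (1 + x ^ 2) ^ 3 *
              (deriv β x * deriv (deriv β) x
                + deriv (fun y => y * β y) x *
                    deriv (deriv (fun y => y * β y)) x)
          = (1 + x ^ 2) ^ 5 * (deriv (deriv β) x) ^ 2)
    ∧
    ((∀ x : ℝ,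
        (1 + x ^ 2) ^ 2 *
            (4 * (x ^ 2 - 1) *
                ((deriv β x) ^ 2 + (deriv (fun y => y * β y) x) ^ 2)
              + (1 + x ^ 2) ^ 2 *
                ((deriv (deriv β) x) ^ 2
                  + (deriv (deriv (fun y => y * β y)) x) ^ 2))
          - 8 * x * (1 + x ^ 2) * (x ^ 2 - 2) *
              (β x * deriv β x
                + (x * β x) * deriv (fun y => y * β y) x)
          + 4 * x ^ 2 * (1 + x ^ 2) ^ 2 *
              (β x * deriv (deriv β) x
                + (x * β x) * deriv (deriv (fun y => y * β y)) x)
          + 4 * (1 - 4 * x ^ 2 + x ^ 4) * ((β x) ^ 2 + (x * β x) ^ 2)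
          - 4 * x * (1 + x ^ 2) ^ 3 *
              (deriv β x * deriv (deriv β) x
                + deriv (fun y => y * β y) x *
                    deriv (deriv (fun y => y * β y)) x)
          = 0)
      ↔ ∃ a₀ d₂ : ℝ, ∀ x : ℝ, β x = a₀ + d₂ * x) := by
  have hf : Differentiable ℝ β := hβ.differentiable (by norm_num)
  have hf' : Differentiable ℝ (deriv β) := hβ.differentiable_deriv_two
  have hconstraint : ∀ x : ℝ, curvatureConstraint x (β x) (x * β x) (deriv β x)
      (deriv (fun y => y * β y) x) (deriv (deriv β) x) (deriv (deriv fun y => y * β y) x)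
        = (1 + x ^ 2) ^ 5 * deriv (deriv β) x ^ 2 := fun x => by
    rw [deriv_id_mul (hf x), deriv_deriv_id_mul hf (hf' x), curvatureConstraint_id_mul]
  refine ⟨hconstraint, ?_⟩
  rw [← deriv_deriv_eq_zero_iff_affine hf hf']
  refine forall_congr' fun x => ?_
  calc _ ↔ (1 + x ^ 2) ^ 5 * deriv (deriv β) x ^ 2 = 0 := by rw [← hconstraint x]; rfl
    _ ↔ _ := by rw [mul_eq_zero, pow_eq_zero_iff two_ne_zero, or_iff_right (by positivity)]
end
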